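/- arXiv:1301.5584 — 3 statements merged into one kernel-verified Lean document; each statement's English description precedes it below -/
import Mathlib

section
/- Assume n ≥ 2. There exist nonzero disjointly supported functions f₊, f₋ : V → ℝ with f₊ ≥ 0 pointwise and f₋ ≤ 0 pointwise, such that R(f₊) ≤ λ₂ and R(f₋) ≤ λ₂. -/
open scoped Classical

namespace CheegerHigher

noncomputable section

variable {n : ℕ}

/-- Weighted degree of a vertex: `w(v) = ∑_u w(v,u)`. -/
def deg (w : Fin n → Fin n → ℝ) (v : Fin n) : ℝ := ∑ u, w v u

/-- Volume of a vertex set. -/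
def vol (w : Fin n → Fin n → ℝ) (S : Finset (Fin n)) : ℝ := ∑ v ∈ S, deg w v

/-- Total weight of (ordered) pairs from `S` to `T`; for disjoint `S`, `T` this is `w(E(S,T))`. -/
def cutWeight (w : Fin n → Fin n → ℝ) (S T : Finset (Fin n)) : ℝ :=
  ∑ u ∈ S, ∑ v ∈ T, w u v

/-- Total edge weight `w(E)` (each unordered edge counted once). -/
def totalWeight (w : Fin n → Fin n → ℝ) : ℝ := (1 / 2 : ℝ) * ∑ u, ∑ v, w u v

/-- Conductance of a set `S`. -/
noncomputable def conductance (w : Fin n → Fin n → ℝ) (S : Finset (Fin n)) : ℝ :=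
  cutWeight w S Sᶜ / min (vol w S) (vol w Sᶜ)

/-- Conductance of the graph: minimum over nonempty proper subsets. -/
noncomputable def minConductance (w : Fin n → Fin n → ℝ) : ℝ :=
  sInf { x | ∃ S : Finset (Fin n), S.Nonempty ∧ S ≠ Finset.univ ∧ x = conductance w S }

/-- `k`-way expansion: min over `k` pairwise disjoint nonempty subsets of the max conductance. -/
noncomputable def multiwayExpansion (w : Fin n → Fin n → ℝ) (k : ℕ) : ℝ :=
  sInf { x | ∃ S : Fin k → Finset (Fin n), (∀ i, (S i).Nonempty) ∧
      (∀ i j, i ≠ j → Disjoint (S i) (S j)) ∧ x = ⨆ i, conductance w (S i) }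

/-- `‖f‖_w²  = ∑_v w(v) f(v)²`. -/
def normWsq (w : Fin n → Fin n → ℝ) (f : Fin n → ℝ) : ℝ := ∑ v, deg w v * f v ^ 2

/-- Dirichlet energy `∑_{{u,v} ∈ E} w(u,v) (f(u)-f(v))²` (each unordered edge once). -/
def energy (w : Fin n → Fin n → ℝ) (f : Fin n → ℝ) : ℝ :=
  (1 / 2 : ℝ) * ∑ u, ∑ v, w u v * (f u - f v) ^ 2

/-- Rayleigh quotient of `f`. -/
noncomputable def rayleigh (w : Fin n → Fin n → ℝ) (f : Fin n → ℝ) : ℝ :=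
  energy w f / normWsq w f

/-- Signless energy `∑_{{u,v} ∈ E} w(u,v) (f(u)+f(v))²`. -/
def signEnergy (w : Fin n → Fin n → ℝ) (f : Fin n → ℝ) : ℝ :=
  (1 / 2 : ℝ) * ∑ u, ∑ v, w u v * (f u + f v) ^ 2

/-- Signless Rayleigh quotient `R⁺(f)`. -/
noncomputable def rayleighP (w : Fin n → Fin n → ℝ) (f : Fin n → ℝ) : ℝ :=
  signEnergy w f / normWsq w f

/-- Normalized Laplacian `𝓛 = I - D^{-1/2} A D^{-1/2}`. -/
noncomputable def normLap (w : Fin n → Fin n → ℝ) : Matrix (Fin n) (Fin n) ℝ :=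
  Matrix.of fun u v =>
    (if u = v then (1 : ℝ) else 0) - w u v / (Real.sqrt (deg w u) * Real.sqrt (deg w v))

/-- Signless normalized Laplacian `𝓜 = I + D^{-1/2} A D^{-1/2}`. -/
noncomputable def signLap (w : Fin n → Fin n → ℝ) : Matrix (Fin n) (Fin n) ℝ :=
  Matrix.of fun u v =>
    (if u = v then (1 : ℝ) else 0) + w u v / (Real.sqrt (deg w u) * Real.sqrt (deg w v))

/-- The `k`-th smallest eigenvalue of a Hermitian matrix (1-based index `k`). -/
noncomputable def sortedEig {A : Matrix (Fin n) (Fin n) ℝ} (hA : A.IsHermitian) (k : ℕ) : ℝ :=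
  if h : k - 1 < n then hA.eigenvalues (Tuple.sort hA.eigenvalues ⟨k - 1, h⟩) else 0

/-- Threshold set `V_f(t) = {v : f(v) ≥ t}`. -/
noncomputable def thresholdSet (f : Fin n → ℝ) (t : ℝ) : Finset (Fin n) :=
  Finset.univ.filter fun v => t ≤ f v

/-- `φ(f)`: best conductance among threshold sets of `f` that are nonempty and proper. -/
noncomputable def phiF (w : Fin n → Fin n → ℝ) (f : Fin n → ℝ) : ℝ :=
  sInf { x | ∃ t : ℝ, (thresholdSet f t).Nonempty ∧ thresholdSet f t ≠ Finset.univ ∧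
      x = conductance w (thresholdSet f t) }

/-- Support of a function, as a finset. -/
noncomputable def supp (f : Fin n → ℝ) : Finset (Fin n) :=
  Finset.univ.filter fun v => f v ≠ 0

/-- `L_f(t) = {v : f(v) ≤ -t}`. -/
noncomputable def Lset (f : Fin n → ℝ) (t : ℝ) : Finset (Fin n) :=
  Finset.univ.filter fun v => f v ≤ -t

/-- `R_f(t) = {v : f(v) ≥ t}`. -/
noncomputable def Rset (f : Fin n → ℝ) (t : ℝ) : Finset (Fin n) :=
  Finset.univ.filter fun v => t ≤ f v

/-- Bipartiteness ratio of an induced cut `(L,R)` (for disjoint `L`, `R`). -/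
noncomputable def biRatio (w : Fin n → Fin n → ℝ) (L R : Finset (Fin n)) : ℝ :=
  (cutWeight w L L + cutWeight w R R + cutWeight w (L ∪ R) (L ∪ R)ᶜ) / vol w (L ∪ R)

/-- `β(f)`: best bipartiteness ratio among threshold cuts of `f`. -/
noncomputable def betaF (w : Fin n → Fin n → ℝ) (f : Fin n → ℝ) : ℝ :=
  sInf { x | ∃ t : ℝ, 0 < t ∧ (Lset f t ∪ Rset f t).Nonempty ∧
      x = biRatio w (Lset f t) (Rset f t) }

/-- `β(G)`: minimum bipartiteness ratio over all induced cuts. -/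
noncomputable def minBeta (w : Fin n → Fin n → ℝ) : ℝ :=
  sInf { x | ∃ L R : Finset (Fin n), Disjoint L R ∧ (L ∪ R).Nonempty ∧ x = biRatio w L R }

/-- Energy of `f` restricted to the interval `(b,a]`:
`∑_{{u,v} ∈ E} w(u,v) · len((b,a] ∩ [f(u),f(v)])²`. -/
def intervalEnergy (w : Fin n → Fin n → ℝ) (f : Fin n → ℝ) (b a : ℝ) : ℝ :=
  (1 / 2 : ℝ) * ∑ u, ∑ v,
    w u v * max 0 (min a (max (f u) (f v)) - max b (min (f u) (f v))) ^ 2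

/-- The relative distance `dist(x,R) = inf_{y ∈ R} |x-y|/y` from a point to a region. -/
noncomputable def regionDist (x : ℝ) (R : Set ℝ) : ℝ :=
  sInf ((fun y => |x - y| / y) '' R)

/-- `g` is a `(2k+1)`-step approximation of `f`: there are thresholds
`0 = t₀ ≤ t₁ ≤ … ≤ t_{2k}` and `g(v)` is a threshold closest to `f(v)`. -/
def IsStepApprox (f g : Fin n → ℝ) (k : ℕ) : Prop :=
  ∃ t : Fin (2 * k + 1) → ℝ, t 0 = 0 ∧ Monotone t ∧
    ∀ v, (∃ i, g v = t i) ∧ ∀ i, |f v - g v| ≤ |f v - t i|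

/-- `g` is a symmetric `(2k+1)`-step approximation of `f`: there are thresholds
`0 = t₀ ≤ t₁ ≤ … ≤ t_{2k}` and `g(v)` is a value among `{±t_i}` closest to `f(v)`. -/
def IsSymStepApprox (f g : Fin n → ℝ) (k : ℕ) : Prop :=
  ∃ t : Fin (2 * k + 1) → ℝ, t 0 = 0 ∧ Monotone t ∧
    ∀ v, (∃ i, g v = t i ∨ g v = -t i) ∧
      ∀ i, |f v - g v| ≤ |f v - t i| ∧ |f v - g v| ≤ |f v + t i|

/-- Edge weights of the induced subgraph on `U`. -/
def inducedW (w : Fin n → Fin n → ℝ) (U : Finset (Fin n)) : Fin n → Fin n → ℝ :=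
  fun u v => if u ∈ U ∧ v ∈ U then w u v else 0

/-- Uncutness `γ(L,R) = w(E(L)) + w(E(R)) + w(E(L∪R, complement))`. -/
noncomputable def uncut (w : Fin n → Fin n → ℝ) (L R : Finset (Fin n)) : ℝ :=
  (1 / 2 : ℝ) * cutWeight w L L + (1 / 2 : ℝ) * cutWeight w R R +
    cutWeight w (L ∪ R) (L ∪ R)ᶜ

/-! Take an eigenvector `g` of `𝓛` for `λ₂` orthogonal to the kernel vector `D^{1/2} 1`: if
`λ₂ > 0` every eigenvector for `λ₂` is, and if `λ₂ = 0` the kernel is at least two-dimensional.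
Then `f = D^{-1/2} g` satisfies `(D - A) f = λ₂ D f` and `∑ d(v) f(v) = 0`, so `f` takes both
signs. Since `w ≥ 0`, `E(f⁺) ≤ ⟨f⁺, (D - A) f⟩ = λ₂ ‖f⁺‖²_w`, and likewise for `-f`. -/

open Matrix

section LinearAlgebra

variable {ι K : Type*} [Fintype ι] [Field K]

lemma IsSymm.dotProduct_eq_zero_of_mulVec_eq_zero {A : Matrix ι ι K} (hA : A.IsSymm)
    {x y : ι → K} {μ : K} (hx : A *ᵥ x = 0) (hy : A *ᵥ y = μ • y) (hμ : μ ≠ 0) :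
    x ⬝ᵥ y = 0 := by
  have h : μ * (x ⬝ᵥ y) = 0 := by
    rw [← smul_eq_mul, ← dotProduct_smul, ← hy, dotProduct_mulVec, ← mulVec_transpose,
      hA.eq, hx, zero_dotProduct]
  exact (mul_eq_zero.mp h).resolve_left hμ

lemma exists_smul_add_smul_ne_zero_dotProduct_eq_zero {u v : ι → K}
    (huv : LinearIndependent K ![u, v]) (z : ι → K) :
    ∃ a b : K, a • u + b • v ≠ 0 ∧ z ⬝ᵥ (a • u + b • v) = 0 := by
  by_cases hu : z ⬝ᵥ u = 0
  · refine ⟨1, 0, ?_, by simp [hu]⟩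
    simpa using huv.ne_zero 0
  · refine ⟨z ⬝ᵥ v, -(z ⬝ᵥ u), fun h => hu ?_, ?_⟩
    · simpa using (LinearIndependent.pair_iff.mp huv _ _ h).2
    · simp only [dotProduct_add, dotProduct_smul, smul_eq_mul]
      ring

end LinearAlgebra

lemma exists_pos_of_sum_mul_eq_zero {ι : Type*} [Fintype ι] {d f : ι → ℝ}
    (hd : ∀ i, 0 < d i) (hsum : ∑ i, d i * f i = 0) (hf : f ≠ 0) : ∃ i, 0 < f i := by
  by_contra! hneg
  refine hf (funext fun i => ?_)
  have h := (Finset.sum_eq_zero_iff_of_nonpos fun j _ =>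
    mul_nonpos_of_nonneg_of_nonpos (hd j).le (hneg j)).mp hsum i (Finset.mem_univ i)
  exact (mul_eq_zero.mp h).resolve_left (hd i).ne'

lemma posPart_mul_eq_sq (a : ℝ) : a⁺ * a = a⁺ ^ 2 := by
  rcases le_total a 0 with h | h <;> simp [h, sq]

lemma mul_div_sqrt_self (x y : ℝ) : x * (y / √x) = √x * y := by
  rw [mul_div_left_comm, Real.div_sqrt, mul_comm]

lemma exists_mulVec_eq_sortedEig_two_smul {A : Matrix (Fin n) (Fin n) ℝ} (hA : A.IsHermitian)
    (hnonneg : ∀ i, 0 ≤ hA.eigenvalues i) {z : Fin n → ℝ} (hz : A *ᵥ z = 0) (hn : 2 ≤ n) :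
    ∃ g : Fin n → ℝ, g ≠ 0 ∧ A *ᵥ g = sortedEig hA 2 • g ∧ z ⬝ᵥ g = 0 := by
  set ψ : Fin n → Fin n → ℝ := fun i => ⇑(hA.eigenvectorBasis i)
  have hψ : LinearIndependent ℝ ψ :=
    hA.eigenvectorBasis.toBasis.linearIndependent.map' (WithLp.linearEquiv 2 ℝ _).toLinearMap
      (LinearEquiv.ker _)
  set i₁ := Tuple.sort hA.eigenvalues ⟨0, by omega⟩
  set i₂ := Tuple.sort hA.eigenvalues ⟨1, hn⟩
  have hlam : sortedEig hA 2 = hA.eigenvalues i₂ := dif_pos hn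
  rw [hlam]
  by_cases hlam₂ : hA.eigenvalues i₂ = 0
  · have hlam₁ : hA.eigenvalues i₁ = 0 :=
      le_antisymm (hlam₂ ▸ Tuple.monotone_sort hA.eigenvalues (Fin.mk_le_mk.mpr (Nat.zero_le 1)))
        (hnonneg i₁)
    have hpair : LinearIndependent ℝ ![ψ i₁, ψ i₂] := by
      have hne : i₁ ≠ i₂ := fun h => by simpa using (Tuple.sort hA.eigenvalues).injective h
      rw [LinearIndependent.pair_iff]
      exact (LinearIndepOn.pair_iff ψ hne).mp (hψ.linearIndepOn _)
    obtain ⟨a, b, hab, horth⟩ := exists_smul_add_smul_ne_zero_dotProduct_eq_zero hpair z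
    refine ⟨a • ψ i₁ + b • ψ i₂, hab, ?_, horth⟩
    simp only [ψ, mulVec_add, mulVec_smul, hA.mulVec_eigenvectorBasis, hlam₁, hlam₂, zero_smul,
      smul_zero, add_zero]
  · refine ⟨ψ i₂, hψ.ne_zero i₂, hA.mulVec_eigenvectorBasis i₂, ?_⟩
    exact IsSymm.dotProduct_eq_zero_of_mulVec_eq_zero
      (isHermitian_iff_isSymm.mp hA) hz (hA.mulVec_eigenvectorBasis i₂) hlam₂

def lap (w : Fin n → Fin n → ℝ) (f : Fin n → ℝ) (u : Fin n) : ℝ :=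
  deg w u * f u - ∑ v, w u v * f v

section Graph

variable {w : Fin n → Fin n → ℝ}

lemma lap_neg (f : Fin n → ℝ) : lap w (-f) = -lap w f := by
  funext u
  simp only [lap, Pi.neg_apply, mul_neg, Finset.sum_neg_distrib]
  ring

lemma sum_mul_lap (hsym : ∀ u v, w u v = w v u) (f : Fin n → ℝ) :
    ∑ u, f u * lap w f u = energy w f := by
  have hswap : ∑ u, ∑ v, w u v * f v ^ 2 = ∑ u, ∑ v, w u v * f u ^ 2 := by
    rw [Finset.sum_comm]; simp_rw [hsym]
  have hlap : ∑ u, f u * lap w f u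
      = ∑ u, ∑ v, w u v * f u ^ 2 - ∑ u, ∑ v, w u v * (f u * f v) := by
    simp only [lap, deg, Finset.sum_mul, Finset.mul_sum, mul_sub, ← Finset.sum_sub_distrib]
    refine Finset.sum_congr rfl fun u _ => Finset.sum_congr rfl fun v _ => ?_
    ring
  have henergy : energy w f = 1 / 2 * (∑ u, ∑ v, w u v * f u ^ 2
      + ∑ u, ∑ v, w u v * f v ^ 2 - 2 * ∑ u, ∑ v, w u v * (f u * f v)) := by
    simp only [energy, Finset.mul_sum, ← Finset.sum_add_distrib, ← Finset.sum_sub_distrib]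
    refine Finset.sum_congr rfl fun u _ => Finset.sum_congr rfl fun v _ => ?_
    ring
  rw [hlap, henergy, hswap]
  ring

lemma energy_nonneg (hnn : ∀ u v, 0 ≤ w u v) (f : Fin n → ℝ) : 0 ≤ energy w f :=
  mul_nonneg (by norm_num) (Finset.sum_nonneg fun u _ => Finset.sum_nonneg fun v _ =>
    mul_nonneg (hnn u v) (sq_nonneg _))

lemma energy_posPart_le (hsym : ∀ u v, w u v = w v u) (hnn : ∀ u v, 0 ≤ w u v)
    (f : Fin n → ℝ) : energy w f⁺ ≤ ∑ u, f⁺ u * lap w f u := by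
  rw [← sum_mul_lap hsym]
  refine Finset.sum_le_sum fun u _ => ?_
  have hsum : f⁺ u * ∑ v, w u v * f v ≤ f⁺ u * ∑ v, w u v * f⁺ v :=
    mul_le_mul_of_nonneg_left (Finset.sum_le_sum fun v _ =>
      mul_le_mul_of_nonneg_left (le_posPart (f v)) (hnn u v)) (posPart_nonneg _)
  have hdiag : f⁺ u * (deg w u * f u) = f⁺ u * (deg w u * f⁺ u) := by
    rw [mul_left_comm, Pi.posPart_apply, posPart_mul_eq_sq]
    ring
  rw [lap, lap, mul_sub, mul_sub, hdiag]
  linarith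

lemma rayleigh_posPart_le (hsym : ∀ u v, w u v = w v u) (hnn : ∀ u v, 0 ≤ w u v)
    (hdeg : ∀ v, 0 < deg w v) {f : Fin n → ℝ} {μ : ℝ}
    (heig : ∀ u, lap w f u = μ * (deg w u * f u)) {v₀ : Fin n} (hv₀ : 0 < f v₀) :
    rayleigh w f⁺ ≤ μ := by
  have hnorm : 0 < normWsq w f⁺ :=
    Finset.sum_pos' (fun v _ => mul_nonneg (hdeg v).le (sq_nonneg _))
      ⟨v₀, Finset.mem_univ _, mul_pos (hdeg v₀) (pow_pos (posPart_pos hv₀) 2)⟩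
  have hquad : ∑ u, f⁺ u * lap w f u = μ * normWsq w f⁺ := by
    simp only [heig, normWsq, Finset.mul_sum]
    refine Finset.sum_congr rfl fun u _ => ?_
    rw [Pi.posPart_apply, ← posPart_mul_eq_sq]
    ring
  rw [rayleigh, div_le_iff₀ hnorm, ← hquad]
  exact energy_posPart_le hsym hnn f

lemma rayleigh_neg (f : Fin n → ℝ) : rayleigh w (-f) = rayleigh w f := by
  have hsq : ∀ u v, (-f u - -f v) ^ 2 = (f u - f v) ^ 2 := fun u v => by ring
  simp only [rayleigh, energy, normWsq, Pi.neg_apply, neg_sq, hsq]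

end Graph

section NormalizedLaplacian

variable {w : Fin n → Fin n → ℝ}

lemma normLap_mulVec_apply (hdeg : ∀ v, 0 < deg w v) (x : Fin n → ℝ) (u : Fin n) :
    (normLap w *ᵥ x) u = lap w (fun v => x v / √(deg w v)) u / √(deg w u) := by
  have hsqrt : ∀ v, √(deg w v) ≠ 0 := fun v => (Real.sqrt_pos.mpr (hdeg v)).ne'
  simp only [mulVec, dotProduct, normLap, of_apply, lap, sub_mul, ite_mul, one_mul, zero_mul,
    Finset.sum_sub_distrib, Finset.sum_ite_eq, Finset.mem_univ, if_true, sub_div,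
    Finset.sum_div, mul_div_sqrt_self]
  congr 1
  · rw [mul_div_cancel_left₀ _ (hsqrt u)]
  · refine Finset.sum_congr rfl fun v _ => ?_
    field_simp

lemma normLap_mulVec_sqrt_deg (hdeg : ∀ v, 0 < deg w v) :
    normLap w *ᵥ (fun v => √(deg w v)) = 0 := by
  funext u
  have hone : (fun v => √(deg w v) / √(deg w v)) = 1 :=
    funext fun v => div_self (Real.sqrt_pos.mpr (hdeg v)).ne'
  rw [normLap_mulVec_apply hdeg, hone]
  simp [lap, deg]

lemma dotProduct_normLap_mulVec (hsym : ∀ u v, w u v = w v u) (hdeg : ∀ v, 0 < deg w v)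
    (x : Fin n → ℝ) :
    x ⬝ᵥ (normLap w *ᵥ x) = energy w (fun v => x v / √(deg w v)) := by
  rw [← sum_mul_lap hsym, dotProduct]
  refine Finset.sum_congr rfl fun u _ => ?_
  rw [normLap_mulVec_apply hdeg]
  ring

lemma normLap_posSemidef (hsym : ∀ u v, w u v = w v u) (hnn : ∀ u v, 0 ≤ w u v)
    (hdeg : ∀ v, 0 < deg w v) (hH : (normLap w).IsHermitian) : (normLap w).PosSemidef :=
  .of_dotProduct_mulVec_nonneg hH fun x => by
    simpa [dotProduct_normLap_mulVec hsym hdeg] using energy_nonneg hnn _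

lemma lap_div_sqrt_deg_eq (hdeg : ∀ v, 0 < deg w v) {g : Fin n → ℝ} {μ : ℝ}
    (hg : normLap w *ᵥ g = μ • g) (u : Fin n) :
    lap w (fun v => g v / √(deg w v)) u = μ * (deg w u * (g u / √(deg w u))) := by
  have h := congrFun hg u
  rw [normLap_mulVec_apply hdeg, Pi.smul_apply, smul_eq_mul,
    div_eq_iff (Real.sqrt_pos.mpr (hdeg u)).ne'] at h
  rw [h, mul_div_sqrt_self]
  ring

end NormalizedLaplacian

theorem exists_disjoint_pos_neg_general
    (hn : 2 ≤ n) (w : Fin n → Fin n → ℝ)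
    (hsym : ∀ u v, w u v = w v u) (hnn : ∀ u v, 0 ≤ w u v)
    (hdeg : ∀ v, 1 ≤ deg w v)
    (hH : (normLap w).IsHermitian) :
    ∃ fp fm : Fin n → ℝ, fp ≠ 0 ∧ fm ≠ 0 ∧
      (∀ v, 0 ≤ fp v) ∧ (∀ v, fm v ≤ 0) ∧
      (∀ v, fp v = 0 ∨ fm v = 0) ∧
      rayleigh w fp ≤ sortedEig hH 2 ∧ rayleigh w fm ≤ sortedEig hH 2 := by
  have hdeg₀ : ∀ v, 0 < deg w v := fun v => one_pos.trans_le (hdeg v)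
  obtain ⟨g, hg, hgeig, hgorth⟩ := exists_mulVec_eq_sortedEig_two_smul hH
    (normLap_posSemidef hsym hnn hdeg₀ hH).eigenvalues_nonneg (normLap_mulVec_sqrt_deg hdeg₀) hn
  set f : Fin n → ℝ := fun v => g v / √(deg w v)
  have hf : f ≠ 0 := fun h => hg (funext fun v => by
    simpa [f, (Real.sqrt_pos.mpr (hdeg₀ v)).ne'] using congrFun h v)
  have hsum : ∑ v, deg w v * f v = 0 := by
    simpa [f, mul_div_sqrt_self, dotProduct] using hgorth
  have heig : ∀ u, lap w f u = sortedEig hH 2 * (deg w u * f u) := lap_div_sqrt_deg_eq hdeg₀ hgeig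
  have heig_neg : ∀ u, lap w (-f) u = sortedEig hH 2 * (deg w u * (-f) u) := fun u => by
    rw [lap_neg, Pi.neg_apply, heig, Pi.neg_apply]
    ring
  obtain ⟨vp, hvp⟩ := exists_pos_of_sum_mul_eq_zero hdeg₀ hsum hf
  obtain ⟨vm, hvm⟩ := exists_pos_of_sum_mul_eq_zero hdeg₀ (by simp [hsum]) (neg_ne_zero.mpr hf)
  refine ⟨f⁺, -(-f)⁺, fun h => (posPart_pos hvp).ne' (congrFun h vp),
    neg_ne_zero.mpr fun h => (posPart_pos hvm).ne' (congrFun h vm),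
    fun v => posPart_nonneg (f v), fun v => neg_nonpos.mpr (posPart_nonneg (-f v)),
    fun v => ?_, rayleigh_posPart_le hsym hnn hdeg₀ heig hvp, ?_⟩
  · rcases le_total (f v) 0 with h | h <;> simp [h]
  · rw [rayleigh_neg]
    exact rayleigh_posPart_le hsym hnn hdeg₀ heig_neg hvm

/-- There are disjointly supported `f₊ ≥ 0` and `f₋ ≤ 0`
with Rayleigh quotients at most `λ₂`. -/
theorem exists_disjoint_pos_neg
    (hn : 2 ≤ n) (w : Fin n → Fin n → ℝ)
    (hsym : ∀ u v, w u v = w v u) (hnn : ∀ u v, 0 ≤ w u v)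
    (hloop : ∀ v, w v v = 0) (hdeg : ∀ v, 1 ≤ deg w v)
    (hH : (normLap w).IsHermitian) :
    ∃ fp fm : Fin n → ℝ, fp ≠ 0 ∧ fm ≠ 0 ∧
      (∀ v, 0 ≤ fp v) ∧ (∀ v, fm v ≤ 0) ∧
      (∀ v, fp v = 0 ∨ fm v = 0) ∧
      rayleigh w fp ≤ sortedEig hH 2 ∧ rayleigh w fm ≤ sortedEig hH 2 :=
  exists_disjoint_pos_neg_general hn w hsym hnn hdeg hH

end

end CheegerHigher
end

section
/- Assume n ≥ 2. There exists a nonzero nonnegative function f : V → ℝ such that R(f) ≤ λ₂, vol(supp(f)) ≤ vol(V)/2, and ‖f‖_w = 1. -/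
/-!
Take a vector `ψ ⊥ D^{1/2} 𝟙` in the span of the two lowest eigenvectors of `𝓛`; then
`g = D^{-1/2} ψ` has weighted mean zero and `R(g) ≤ λ₂`. Subtracting a weighted median `c` leaves
the energy unchanged and, the weighted mean being zero, does not decrease `‖·‖_w`. Each of the
positive and negative parts of `g - c` is supported on at most half the volume, and since the
energy is subadditive and `‖·‖_w²` additive over this split, one of them has Rayleigh quotient at
most `R(g - c) ≤ λ₂`. Normalize it.
-/

open scoped Classical

namespace CheegerHigher

noncomputable section

variable {n : ℕ}

open Matrix

section Spectral

variable {ι : Type*} [Fintype ι] [DecidableEq ι] {A : Matrix ι ι ℝ}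

lemma _root_.Matrix.IsHermitian.eigenvectorBasis_dotProduct (hA : A.IsHermitian) (i j : ι) :
    (hA.eigenvectorBasis i).ofLp ⬝ᵥ (hA.eigenvectorBasis j).ofLp = if i = j then 1 else 0 := by
  rw [← orthonormal_iff_ite.mp hA.eigenvectorBasis.orthonormal i j]
  simp [EuclideanSpace.inner_eq_star_dotProduct, dotProduct_comm]

lemma _root_.Matrix.IsHermitian.dotProduct_mulVec_eigenvector_pair (hA : A.IsHermitian) {i j : ι}
    (hij : i ≠ j) (a b : ℝ) :
    (a • (hA.eigenvectorBasis i).ofLp + b • (hA.eigenvectorBasis j).ofLp) ⬝ᵥ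
        (A *ᵥ (a • (hA.eigenvectorBasis i).ofLp + b • (hA.eigenvectorBasis j).ofLp)) =
      a ^ 2 * hA.eigenvalues i + b ^ 2 * hA.eigenvalues j := by
  simp only [mulVec_add, mulVec_smul, hA.mulVec_eigenvectorBasis, add_dotProduct,
    dotProduct_add, smul_dotProduct, dotProduct_smul, hA.eigenvectorBasis_dotProduct,
    smul_eq_mul]
  simp [hij, hij.symm]
  ring

lemma _root_.Matrix.IsHermitian.dotProduct_self_eigenvector_pair (hA : A.IsHermitian) {i j : ι}
    (hij : i ≠ j) (a b : ℝ) :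
    (a • (hA.eigenvectorBasis i).ofLp + b • (hA.eigenvectorBasis j).ofLp) ⬝ᵥ
        (a • (hA.eigenvectorBasis i).ofLp + b • (hA.eigenvectorBasis j).ofLp) =
      a ^ 2 + b ^ 2 := by
  simp only [add_dotProduct, dotProduct_add, smul_dotProduct, dotProduct_smul,
    hA.eigenvectorBasis_dotProduct, smul_eq_mul]
  simp [hij, hij.symm]
  ring

end Spectral

lemma exists_orthogonal_dotProduct_mulVec_le_sortedEig_two {A : Matrix (Fin n) (Fin n) ℝ}
    (hA : A.IsHermitian) (hn : 2 ≤ n) (u : Fin n → ℝ) :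
    ∃ x : Fin n → ℝ, x ≠ 0 ∧ u ⬝ᵥ x = 0 ∧ x ⬝ᵥ (A *ᵥ x) ≤ sortedEig hA 2 * (x ⬝ᵥ x) := by
  set i₁ := Tuple.sort hA.eigenvalues ⟨0, by omega⟩
  set i₂ := Tuple.sort hA.eigenvalues ⟨1, by omega⟩
  have hne : i₁ ≠ i₂ := fun h => by simpa using (Tuple.sort hA.eigenvalues).injective h
  have hle : hA.eigenvalues i₁ ≤ hA.eigenvalues i₂ :=
    Tuple.monotone_sort hA.eigenvalues (show (⟨0, _⟩ : Fin n) ≤ ⟨1, _⟩ by simp)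
  have hsorted : sortedEig hA 2 = hA.eigenvalues i₂ := dif_pos (by omega)
  set e₁ := (hA.eigenvectorBasis i₁).ofLp
  set e₂ := (hA.eigenvectorBasis i₂).ofLp
  obtain ⟨a, b, hab, hu⟩ : ∃ a b : ℝ, 0 < a ^ 2 + b ^ 2 ∧ a * (u ⬝ᵥ e₁) + b * (u ⬝ᵥ e₂) = 0 := by
    by_cases h₁ : u ⬝ᵥ e₁ = 0
    · exact ⟨1, 0, by norm_num, by simp [h₁]⟩
    · exact ⟨u ⬝ᵥ e₂, -(u ⬝ᵥ e₁),
        lt_add_of_le_of_pos (sq_nonneg _) (sq_pos_of_ne_zero (neg_ne_zero.mpr h₁)), by ring⟩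
  have hnorm := hA.dotProduct_self_eigenvector_pair hne a b
  refine ⟨a • e₁ + b • e₂, fun h => ?_, by simpa [dotProduct_add] using hu, ?_⟩
  · rw [h, dotProduct_zero] at hnorm
    linarith
  · rw [hA.dotProduct_mulVec_eigenvector_pair hne, hnorm, hsorted]
    nlinarith [mul_le_mul_of_nonneg_left hle (sq_nonneg a)]

lemma sq_posPart_add_sq_negPart (a : ℝ) : a⁺ ^ 2 + a⁻ ^ 2 = a ^ 2 := by
  rcases le_total 0 a with ha | ha
  · simp [posPart_eq_self.mpr ha, negPart_eq_zero.mpr ha]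
  · simp [posPart_eq_zero.mpr ha, negPart_eq_neg.mpr ha]

lemma sq_posPart_sub_add_sq_negPart_sub_le (a b : ℝ) :
    (a⁺ - b⁺) ^ 2 + (a⁻ - b⁻) ^ 2 ≤ (a - b) ^ 2 := by
  rcases le_total 0 a with ha | ha <;> rcases le_total 0 b with hb | hb <;>
    simp only [posPart_eq_self.mpr, negPart_eq_zero.mpr, posPart_eq_zero.mpr, negPart_eq_neg.mpr,
      ha, hb] <;>
    nlinarith

lemma pos_and_le_mul_or_pos_and_le_mul_of_add_le_mul {E₁ E₂ N₁ N₂ R : ℝ} (hE₁ : 0 ≤ E₁)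
    (hE₂ : 0 ≤ E₂) (hN₁ : 0 ≤ N₁) (hN₂ : 0 ≤ N₂) (hN : 0 < N₁ + N₂)
    (h : E₁ + E₂ ≤ R * (N₁ + N₂)) : (0 < N₁ ∧ E₁ ≤ R * N₁) ∨ (0 < N₂ ∧ E₂ ≤ R * N₂) := by
  by_contra! hcon
  rw [mul_add] at h
  rcases hN₁.eq_or_lt with rfl | h₁ <;> rcases hN₂.eq_or_lt with rfl | h₂
  · simp at hN
  · linarith [hcon.2 h₂]
  · linarith [hcon.1 h₁]
  · linarith [hcon.1 h₁, hcon.2 h₂]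

lemma exists_weighted_median {ι : Type*} (s : Finset ι) {μ : ι → ℝ} (hμ : ∀ i ∈ s, 0 ≤ μ i)
    (g : ι → ℝ) :
    ∃ c, ∑ i ∈ s with c < g i, μ i ≤ (∑ i ∈ s, μ i) / 2 ∧
      ∑ i ∈ s with g i < c, μ i ≤ (∑ i ∈ s, μ i) / 2 := by
  rcases s.eq_empty_or_nonempty with rfl | hs
  · exact ⟨0, by simp, by simp⟩
  have htotal : 0 ≤ ∑ i ∈ s, μ i := Finset.sum_nonneg hμ
  set good := (s.image g).filter fun t => (∑ i ∈ s, μ i) / 2 ≤ ∑ i ∈ s with g i ≤ t, μ i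
  have hgood : good.Nonempty := by
    obtain ⟨i, hi, hmax⟩ := s.exists_max_image g hs
    refine ⟨g i, Finset.mem_filter.mpr ⟨Finset.mem_image_of_mem g hi, ?_⟩⟩
    rw [Finset.filter_true_of_mem hmax]
    linarith
  set c := good.min' hgood
  have hc : (∑ i ∈ s, μ i) / 2 ≤ ∑ i ∈ s with g i ≤ c, μ i :=
    (Finset.mem_filter.mp (good.min'_mem hgood)).2
  refine ⟨c, ?_, ?_⟩
  · have hsplit := Finset.sum_filter_add_sum_filter_not s (fun i => g i ≤ c) μ
    simp only [not_le] at hsplit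
    linarith
  rcases (s.filter fun i => g i < c).eq_empty_or_nonempty with hempty | hlt
  · rw [hempty, Finset.sum_empty]
    linarith
  obtain ⟨j, hj, hjmax⟩ := Finset.exists_max_image _ g hlt
  obtain ⟨hjs, hjc⟩ := Finset.mem_filter.mp hj
  have hj_not : g j ∉ good := fun hmem => (good.min'_le _ hmem).not_gt hjc
  have hsmall : ∑ i ∈ s with g i ≤ g j, μ i < (∑ i ∈ s, μ i) / 2 := by
    by_contra! hge
    exact hj_not (Finset.mem_filter.mpr ⟨Finset.mem_image_of_mem g hjs, hge⟩)
  calc ∑ i ∈ s with g i < c, μ i ≤ ∑ i ∈ s with g i ≤ g j, μ i :=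
        Finset.sum_le_sum_of_subset_of_nonneg
          (fun i hi => Finset.mem_filter.mpr ⟨(Finset.mem_filter.mp hi).1, hjmax i hi⟩)
          fun i hi _ => hμ i (Finset.mem_filter.mp hi).1
    _ ≤ _ := hsmall.le

section Graph

variable {w : Fin n → Fin n → ℝ}

lemma normWsq_nonneg (hdeg : ∀ v, 0 ≤ deg w v) (f : Fin n → ℝ) : 0 ≤ normWsq w f :=
  Finset.sum_nonneg fun v _ => mul_nonneg (hdeg v) (sq_nonneg _)

lemma energy_eq_sum_deg_mul_sq_sub (hsym : ∀ u v, w u v = w v u) (g : Fin n → ℝ) :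
    energy w g = ∑ u, deg w u * g u ^ 2 - ∑ u, ∑ v, w u v * (g u * g v) := by
  have hleft : ∑ u, ∑ v, w u v * g u ^ 2 = ∑ u, deg w u * g u ^ 2 := by
    simp only [deg, Finset.sum_mul]
  have hright : ∑ u, ∑ v, w u v * g v ^ 2 = ∑ u, deg w u * g u ^ 2 := by
    rw [Finset.sum_comm, ← hleft]
    exact Finset.sum_congr rfl fun u _ => Finset.sum_congr rfl fun v _ => by rw [hsym]
  calc energy w g = (1 / 2) * (∑ u, ∑ v, w u v * g u ^ 2 + ∑ u, ∑ v, w u v * g v ^ 2 -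
        2 * ∑ u, ∑ v, w u v * (g u * g v)) := by
        simp only [energy, Finset.mul_sum, ← Finset.sum_add_distrib, ← Finset.sum_sub_distrib]
        congr! 3
        ring
    _ = _ := by rw [hleft, hright]; ring

def sqrtDeg (w : Fin n → Fin n → ℝ) : Fin n → ℝ := fun v => √(deg w v)

lemma sqrtDeg_mul_sqrtDeg (hdeg : ∀ v, 0 ≤ deg w v) (v : Fin n) :
    sqrtDeg w v * sqrtDeg w v = deg w v :=
  Real.mul_self_sqrt (hdeg v)

lemma normWsq_eq_dotProduct (hdeg : ∀ v, 0 ≤ deg w v) (g : Fin n → ℝ) :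
    normWsq w g = (sqrtDeg w * g) ⬝ᵥ (sqrtDeg w * g) :=
  Finset.sum_congr rfl fun v _ => by
    rw [Pi.mul_apply, mul_mul_mul_comm, sqrtDeg_mul_sqrtDeg hdeg, sq]

lemma sqrtDeg_dotProduct (hdeg : ∀ v, 0 ≤ deg w v) (g : Fin n → ℝ) :
    sqrtDeg w ⬝ᵥ (sqrtDeg w * g) = ∑ v, deg w v * g v :=
  Finset.sum_congr rfl fun v _ => by rw [Pi.mul_apply, ← mul_assoc, sqrtDeg_mul_sqrtDeg hdeg]

lemma energy_eq_dotProduct_normLap_mulVec (hsym : ∀ u v, w u v = w v u)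
    (hdeg : ∀ v, 0 < deg w v) (g : Fin n → ℝ) :
    energy w g = (sqrtDeg w * g) ⬝ᵥ (normLap w *ᵥ (sqrtDeg w * g)) := by
  have hne : ∀ v, √(deg w v) ≠ 0 := fun v => (Real.sqrt_pos.mpr (hdeg v)).ne'
  rw [energy_eq_sum_deg_mul_sq_sub hsym, ← Finset.sum_sub_distrib]
  refine Finset.sum_congr rfl fun u _ => ?_
  simp only [mulVec, dotProduct, normLap, sqrtDeg, of_apply, Pi.mul_apply, Finset.mul_sum, sub_mul,
    ite_mul, one_mul, zero_mul, mul_sub, Finset.sum_sub_distrib]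
  congr 1
  · simp only [mul_ite, mul_zero, Finset.sum_ite_eq, Finset.mem_univ, if_true]
    linear_combination -(g u ^ 2) * Real.mul_self_sqrt (hdeg u).le
  · refine Finset.sum_congr rfl fun v _ => ?_
    field_simp [hne u, hne v]

lemma exists_energy_le_sortedEig_two (hn : 2 ≤ n) (hsym : ∀ u v, w u v = w v u)
    (hdeg : ∀ v, 0 < deg w v) (hH : (normLap w).IsHermitian) :
    ∃ g : Fin n → ℝ, 0 < normWsq w g ∧ ∑ v, deg w v * g v = 0 ∧
      energy w g ≤ sortedEig hH 2 * normWsq w g := by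
  obtain ⟨ψ, hψ, horth, hle⟩ :=
    exists_orthogonal_dotProduct_mulVec_le_sortedEig_two hH hn (sqrtDeg w)
  have hψg : sqrtDeg w * (ψ / sqrtDeg w) = ψ :=
    funext fun v => mul_div_cancel₀ _ (Real.sqrt_pos.mpr (hdeg v)).ne'
  have hdeg₀ : ∀ v, 0 ≤ deg w v := fun v => (hdeg v).le
  refine ⟨ψ / sqrtDeg w, ?_, ?_, ?_⟩
  · rw [normWsq_eq_dotProduct hdeg₀, hψg]
    exact (Finset.sum_nonneg fun v _ => mul_self_nonneg (ψ v)).lt_of_ne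
      (Ne.symm (dotProduct_self_eq_zero.not.mpr hψ))
  · rw [← sqrtDeg_dotProduct hdeg₀, hψg, horth]
  · rwa [energy_eq_dotProduct_normLap_mulVec hsym hdeg, normWsq_eq_dotProduct hdeg₀, hψg]

lemma energy_sub_const (g : Fin n → ℝ) (c : ℝ) : energy w (fun v => g v - c) = energy w g := by
  simp only [energy, sub_sub_sub_cancel_right]

lemma normWsq_sub_const {g : Fin n → ℝ} (hmean : ∑ v, deg w v * g v = 0) (c : ℝ) :
    normWsq w (fun v => g v - c) = normWsq w g + c ^ 2 * vol w Finset.univ := by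
  have hexpand : ∀ v, deg w v * (g v - c) ^ 2 =
      deg w v * g v ^ 2 - 2 * c * (deg w v * g v) + c ^ 2 * deg w v := fun v => by ring
  simp only [normWsq, vol, hexpand, Finset.sum_add_distrib, Finset.sum_sub_distrib,
    ← Finset.mul_sum, hmean]
  ring

lemma exists_sub_const_energy_le (hnn : ∀ u v, 0 ≤ w u v) (hdeg : ∀ v, 0 ≤ deg w v)
    {g : Fin n → ℝ} {R : ℝ} (hg : 0 < normWsq w g) (hmean : ∑ v, deg w v * g v = 0)
    (hE : energy w g ≤ R * normWsq w g) :
    ∃ h : Fin n → ℝ, 0 < normWsq w h ∧ energy w h ≤ R * normWsq w h ∧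
      vol w (Finset.univ.filter fun v => 0 < h v) ≤ vol w Finset.univ / 2 ∧
      vol w (Finset.univ.filter fun v => h v < 0) ≤ vol w Finset.univ / 2 := by
  obtain ⟨c, hc_gt, hc_lt⟩ := exists_weighted_median Finset.univ (fun v _ => hdeg v) g
  have hR : 0 ≤ R := nonneg_of_mul_nonneg_left ((energy_nonneg hnn g).trans hE) hg
  have hgrow : normWsq w g ≤ normWsq w (fun v => g v - c) := by
    rw [normWsq_sub_const hmean]
    have : 0 ≤ vol w Finset.univ := Finset.sum_nonneg fun v _ => hdeg v
    nlinarith [sq_nonneg c]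
  refine ⟨fun v => g v - c, hg.trans_le hgrow, ?_, ?_, ?_⟩
  · rw [energy_sub_const]
    exact hE.trans (mul_le_mul_of_nonneg_left hgrow hR)
  · simpa only [vol, sub_pos] using hc_gt
  · simpa only [vol, sub_neg] using hc_lt

lemma normWsq_posPart_add_normWsq_negPart (h : Fin n → ℝ) :
    normWsq w h⁺ + normWsq w h⁻ = normWsq w h := by
  simp only [normWsq, ← Finset.sum_add_distrib, Pi.posPart_apply, Pi.negPart_apply, ← mul_add,
    sq_posPart_add_sq_negPart]

lemma energy_posPart_add_energy_negPart_le (hnn : ∀ u v, 0 ≤ w u v) (h : Fin n → ℝ) :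
    energy w h⁺ + energy w h⁻ ≤ energy w h := by
  simp only [energy, ← mul_add, ← Finset.sum_add_distrib, Pi.posPart_apply, Pi.negPart_apply]
  refine mul_le_mul_of_nonneg_left
    (Finset.sum_le_sum fun u _ => Finset.sum_le_sum fun v _ => ?_) (by norm_num)
  exact mul_le_mul_of_nonneg_left (sq_posPart_sub_add_sq_negPart_sub_le _ _) (hnn u v)

lemma supp_posPart (h : Fin n → ℝ) : supp h⁺ = Finset.univ.filter fun v => 0 < h v := by
  simp [supp, Pi.posPart_apply, posPart_eq_zero]

lemma supp_negPart (h : Fin n → ℝ) : supp h⁻ = Finset.univ.filter fun v => h v < 0 := by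
  simp [supp, Pi.negPart_apply, negPart_eq_zero]

lemma exists_nonneg_energy_le_of_vol_halves (hnn : ∀ u v, 0 ≤ w u v)
    (hdeg : ∀ v, 0 ≤ deg w v) {h : Fin n → ℝ} {R : ℝ} (hh : 0 < normWsq w h)
    (hE : energy w h ≤ R * normWsq w h)
    (hpos : vol w (Finset.univ.filter fun v => 0 < h v) ≤ vol w Finset.univ / 2)
    (hneg : vol w (Finset.univ.filter fun v => h v < 0) ≤ vol w Finset.univ / 2) :
    ∃ F : Fin n → ℝ, 0 ≤ F ∧ 0 < normWsq w F ∧ energy w F ≤ R * normWsq w F ∧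
      vol w (supp F) ≤ vol w Finset.univ / 2 := by
  rw [← normWsq_posPart_add_normWsq_negPart] at hh hE
  rcases pos_and_le_mul_or_pos_and_le_mul_of_add_le_mul (energy_nonneg hnn _)
      (energy_nonneg hnn _) (normWsq_nonneg hdeg _) (normWsq_nonneg hdeg _) hh
      ((energy_posPart_add_energy_negPart_le hnn h).trans hE) with ⟨hN, hle⟩ | ⟨hN, hle⟩
  · exact ⟨h⁺, posPart_nonneg h, hN, hle, by rwa [supp_posPart]⟩
  · exact ⟨h⁻, negPart_nonneg h, hN, hle, by rwa [supp_negPart]⟩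

lemma normWsq_smul (c : ℝ) (f : Fin n → ℝ) : normWsq w (c • f) = c ^ 2 * normWsq w f := by
  simp only [normWsq, Finset.mul_sum, Pi.smul_apply, smul_eq_mul]
  exact Finset.sum_congr rfl fun v _ => by ring

lemma energy_smul (c : ℝ) (f : Fin n → ℝ) : energy w (c • f) = c ^ 2 * energy w f := by
  simp only [energy, Finset.mul_sum, Pi.smul_apply, smul_eq_mul]
  exact Finset.sum_congr rfl fun u _ => Finset.sum_congr rfl fun v _ => by ring

lemma supp_smul {c : ℝ} (hc : c ≠ 0) (f : Fin n → ℝ) : supp (c • f) = supp f := by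
  simp [supp, hc]

end Graph

theorem exists_small_support_test_function_general
    (hn : 2 ≤ n) (w : Fin n → Fin n → ℝ)
    (hsym : ∀ u v, w u v = w v u) (hnn : ∀ u v, 0 ≤ w u v)
    (hdeg : ∀ v, 1 ≤ deg w v)
    (hH : (normLap w).IsHermitian) :
    ∃ f : Fin n → ℝ, f ≠ 0 ∧ (∀ v, 0 ≤ f v) ∧
      rayleigh w f ≤ sortedEig hH 2 ∧
      vol w (supp f) ≤ vol w Finset.univ / 2 ∧
      normWsq w f = 1 := by
  have hdeg_pos : ∀ v, 0 < deg w v := fun v => one_pos.trans_le (hdeg v)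
  have hdeg_nonneg : ∀ v, 0 ≤ deg w v := fun v => (hdeg_pos v).le
  obtain ⟨g, hg, hmean, hgE⟩ := exists_energy_le_sortedEig_two hn hsym hdeg_pos hH
  obtain ⟨h, hh, hhE, hpos, hneg⟩ := exists_sub_const_energy_le hnn hdeg_nonneg hg hmean hgE
  obtain ⟨F, hF_nonneg, hF, hFE, hF_supp⟩ :=
    exists_nonneg_energy_le_of_vol_halves hnn hdeg_nonneg hh hhE hpos hneg
  set s := (√(normWsq w F))⁻¹
  have hs : 0 < s := inv_pos.mpr (Real.sqrt_pos.mpr hF)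
  have hnorm : normWsq w (s • F) = 1 := by
    rw [normWsq_smul, inv_pow, Real.sq_sqrt hF.le, inv_mul_cancel₀ hF.ne']
  refine ⟨s • F, fun h0 => by rw [h0] at hnorm; simp [normWsq] at hnorm,
    fun v => mul_nonneg hs.le (hF_nonneg v), ?_, by rwa [supp_smul hs.ne'], hnorm⟩
  rw [rayleigh, hnorm, div_one, energy_smul]
  calc s ^ 2 * energy w F ≤ s ^ 2 * (sortedEig hH 2 * normWsq w F) := by gcongr
    _ = sortedEig hH 2 := by rw [mul_left_comm, ← normWsq_smul, hnorm, mul_one]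

/-- There is a nonzero nonnegative `f` with `R(f) ≤ λ₂`,
`vol(supp(f)) ≤ vol(V)/2`, and `‖f‖_w = 1`. -/
theorem exists_small_support_test_function
    (hn : 2 ≤ n) (w : Fin n → Fin n → ℝ)
    (hsym : ∀ u v, w u v = w v u) (hnn : ∀ u v, 0 ≤ w u v)
    (hloop : ∀ v, w v v = 0) (hdeg : ∀ v, 1 ≤ deg w v)
    (hH : (normLap w).IsHermitian) :
    ∃ f : Fin n → ℝ, f ≠ 0 ∧ (∀ v, 0 ≤ f v) ∧
      rayleigh w f ≤ sortedEig hH 2 ∧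
      vol w (supp f) ≤ vol w Finset.univ / 2 ∧
      normWsq w f = 1 :=
  exists_small_support_test_function_general hn w hsym hnn hdeg hH

end

end CheegerHigher
end

section
/- Let h : V → ℝ be a nonzero nonnegative function with vol(supp(h)) ≤ vol(V)/2. Then φ(h) ≤ (Σ_{{u,v} ∈ E} w(u,v)·|h(u) − h(v)|) / (Σ_v w(v)·h(v)); in particular, there exists t > 0 such that V_h(t) is nonempty and φ(V_h(t)) is at most the right-hand side. -/
/-!
A discrete co-area argument. For `h ≥ 0`, `∑_v w(v) h(v) = ∫₀^∞ vol(V_h(t)) dt` and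
`∑_{uv ∈ E} w(u,v) |h(u) - h(v)| = ∫₀^∞ w(E(V_h(t), V ∖ V_h(t))) dt`, so if `φ` is the
least ratio `cut / vol` over the threshold sets `V_h(t)`, `t > 0`, integrating
`φ · vol ≤ cut` bounds `φ` by the ratio of the two sums. The integrals are evaluated by
peeling off the lowest layer `t · 1_{supp h}` (`t` the least positive value of `h`) and
inducting on `|supp h|`. As `V_h(t) ⊆ supp h` for `t > 0`, the hypothesis
`vol(supp h) ≤ vol(V)/2` makes `V_h(t)` the smaller side of its cut, so `cut / vol` is its
conductance.
-/

open scoped Classical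

namespace CheegerHigher

noncomputable section

variable {n : ℕ}

section Coarea

variable (w : Fin n → Fin n → ℝ)

lemma thresholdSet_posPart_sub {f : Fin n → ℝ} {s : ℝ} (t : ℝ) (hs : 0 < s) :
    thresholdSet (fun v => (f v - t)⁺) s = thresholdSet f (s + t) := by
  ext v
  simp only [thresholdSet, Finset.mem_filter, Finset.mem_univ, true_and, posPart, le_sup_iff]
  constructor
  · rintro (h | h) <;> linarith
  · intro h; left; linarith

lemma supp_posPart_sub_apply_ssubset {f : Fin n → ℝ} {v : Fin n} (hv : 0 < f v) :
    supp (fun u => (f u - f v)⁺) ⊂ supp f := by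
  refine (Finset.ssubset_iff_of_subset fun u hu => ?_).2 ⟨v, ?_, ?_⟩
  · simp only [supp, Finset.mem_filter, Finset.mem_univ, true_and] at hu ⊢
    intro hu0
    simp [hu0, hv.le] at hu
  · simp [supp, hv.ne']
  · simp [supp]

lemma supp_eq_thresholdSet {f : Fin n → ℝ} {t : ℝ} (ht : 0 < t)
    (hf : ∀ v, f v = 0 ∨ t ≤ f v) : supp f = thresholdSet f t := by
  ext v
  simp only [supp, thresholdSet, Finset.mem_filter, Finset.mem_univ, true_and]
  rcases hf v with h | h
  · simp [h, ht.not_ge]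
  · simp only [h, iff_true]; linarith

lemma sum_deg_mul_eq_add {f : Fin n → ℝ} {t : ℝ} (ht : 0 < t)
    (hf : ∀ v, f v = 0 ∨ t ≤ f v) :
    ∑ v, deg w v * f v = t * vol w (supp f) + ∑ v, deg w v * (f v - t)⁺ := by
  rw [vol, supp, Finset.sum_filter, Finset.mul_sum, ← Finset.sum_add_distrib]
  refine Finset.sum_congr rfl fun v _ => ?_
  rcases hf v with h | h
  · simp [h, ht.le]
  · rw [if_pos (by linarith), posPart_eq_self.2 (by linarith)]; ring

lemma sum_posPart_eq_add {f : Fin n → ℝ} {t : ℝ} (ht : 0 < t)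
    (hf : ∀ v, f v = 0 ∨ t ≤ f v) :
    ∑ u, ∑ v, w u v * (f u - f v)⁺ =
      t * cutWeight w (supp f) (supp f)ᶜ +
        ∑ u, ∑ v, w u v * ((f u - t)⁺ - (f v - t)⁺)⁺ := by
  rw [cutWeight, supp, Finset.compl_filter, Finset.sum_filter, Finset.mul_sum,
    ← Finset.sum_add_distrib]
  refine Finset.sum_congr rfl fun u _ => ?_
  rcases hf u with hu | hu
  · have hf₀ : ∀ v, 0 ≤ f v := fun v => (hf v).elim (·.ge) (ht.le.trans ·)
    simp [hu, ht.le, negPart_eq_zero.2 (hf₀ _)]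
  rw [if_pos (by linarith), Finset.sum_filter, Finset.mul_sum, ← Finset.sum_add_distrib]
  refine Finset.sum_congr rfl fun v _ => ?_
  have hu' : (f u - t)⁺ = f u - t := posPart_eq_self.2 (by linarith)
  rcases hf v with hv | hv
  · rw [hv, if_pos (not_not.2 rfl), zero_sub, posPart_eq_zero.2 (neg_nonpos.2 ht.le), sub_zero,
      sub_zero, hu', posPart_eq_self.2 (by linarith), posPart_eq_self.2 (by linarith)]
    ring
  · rw [if_neg (not_not.2 (ht.trans_le hv).ne'), hu',
      posPart_eq_self.2 (by linarith : 0 ≤ f v - t), sub_sub_sub_cancel_right]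
    ring

theorem mul_sum_deg_le_sum_posPart (φ : ℝ) {f : Fin n → ℝ} (hf : ∀ v, 0 ≤ f v)
    (hφ : ∀ t, 0 < t →
      φ * vol w (thresholdSet f t) ≤ cutWeight w (thresholdSet f t) (thresholdSet f t)ᶜ) :
    φ * ∑ v, deg w v * f v ≤ ∑ u, ∑ v, w u v * (f u - f v)⁺ := by
  induction hk : (supp f).card using Nat.strong_induction_on generalizing f with
  | _ k ih =>
  obtain hempty | ⟨v, hv, hmin⟩ :=
    (supp f).eq_empty_or_nonempty.imp id (Finset.exists_min_image _ f)
  · simp only [supp, Finset.filter_eq_empty_iff, Finset.mem_univ, not_not, true_implies]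
      at hempty
    simp [hempty]
  have ht : 0 < f v := (hf v).lt_of_ne' (by simpa [supp] using hv)
  have hlayer : ∀ u, f u = 0 ∨ f v ≤ f u := fun u =>
    or_iff_not_imp_left.2 fun hu => hmin u (by simpa [supp] using hu)
  have hpeeled := ih _ (hk ▸ Finset.card_lt_card (supp_posPart_sub_apply_ssubset ht))
    (fun u => posPart_nonneg _)
    (fun s hs => by rw [thresholdSet_posPart_sub _ hs]; exact hφ _ (by linarith)) rfl
  have hbottom : φ * vol w (supp f) ≤ cutWeight w (supp f) (supp f)ᶜ := by
    rw [supp_eq_thresholdSet ht hlayer]; exact hφ _ ht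
  calc φ * ∑ u, deg w u * f u
      = f v * (φ * vol w (supp f)) + φ * ∑ u, deg w u * (f u - f v)⁺ := by
        rw [sum_deg_mul_eq_add w ht hlayer]; ring
    _ ≤ f v * cutWeight w (supp f) (supp f)ᶜ +
          ∑ u, ∑ u', w u u' * ((f u - f v)⁺ - (f u' - f v)⁺)⁺ :=
        add_le_add (mul_le_mul_of_nonneg_left hbottom ht.le) hpeeled
    _ = ∑ u, ∑ u', w u u' * (f u - f u')⁺ := (sum_posPart_eq_add w ht hlayer).symm

end Coarea

section Conductance

variable (w : Fin n → Fin n → ℝ)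

lemma half_sum_abs_sub_eq_sum_posPart (hsym : ∀ u v, w u v = w v u) (f : Fin n → ℝ) :
    (1 / 2 : ℝ) * ∑ u, ∑ v, w u v * |f u - f v| = ∑ u, ∑ v, w u v * (f u - f v)⁺ := by
  have hswap : ∑ u, ∑ v, w u v * (f u - f v)⁻ = ∑ u, ∑ v, w u v * (f u - f v)⁺ := by
    rw [Finset.sum_comm]
    simp only [hsym, ← posPart_neg, neg_sub]
  simp only [← posPart_add_negPart, mul_add, Finset.sum_add_distrib, hswap]
  ring

lemma deg_nonneg (hnn : ∀ u v, 0 ≤ w u v) (v : Fin n) : 0 ≤ deg w v :=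
  Finset.sum_nonneg fun u _ => hnn v u

lemma vol_pos (hdeg : ∀ v, 0 < deg w v) {S : Finset (Fin n)} (hS : S.Nonempty) :
    0 < vol w S :=
  Finset.sum_pos (fun v _ => hdeg v) hS

lemma vol_mono (hnn : ∀ u v, 0 ≤ w u v) {S T : Finset (Fin n)} (hST : S ⊆ T) :
    vol w S ≤ vol w T :=
  Finset.sum_le_sum_of_subset_of_nonneg hST fun v _ _ => deg_nonneg w hnn v

lemma conductance_nonneg (hnn : ∀ u v, 0 ≤ w u v) (S : Finset (Fin n)) :
    0 ≤ conductance w S :=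
  div_nonneg (Finset.sum_nonneg fun u _ => Finset.sum_nonneg fun v _ => hnn u v)
    (le_min (vol_mono w hnn S.empty_subset) (vol_mono w hnn Sᶜ.empty_subset))

lemma conductance_eq_div_vol {S : Finset (Fin n)} (hS : vol w S ≤ vol w Finset.univ / 2) :
    conductance w S = cutWeight w S Sᶜ / vol w S := by
  have hsplit : vol w S + vol w Sᶜ = vol w Finset.univ := Finset.sum_add_sum_compl S (deg w)
  rw [conductance, min_eq_left (by linarith)]

lemma phiF_le_conductance (hnn : ∀ u v, 0 ≤ w u v) {f : Fin n → ℝ} {t : ℝ}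
    (hne : (thresholdSet f t).Nonempty) (hproper : thresholdSet f t ≠ Finset.univ) :
    phiF w f ≤ conductance w (thresholdSet f t) :=
  csInf_le ⟨0, by rintro _ ⟨s, -, -, rfl⟩; exact conductance_nonneg w hnn _⟩
    ⟨t, hne, hproper, rfl⟩

lemma thresholdSet_subset_supp {f : Fin n → ℝ} {t : ℝ} (ht : 0 < t) :
    thresholdSet f t ⊆ supp f := fun v hv => by
  simp only [thresholdSet, supp, Finset.mem_filter, Finset.mem_univ, true_and] at hv ⊢
  linarith

lemma exists_thresholdSet_eq_apply {f : Fin n → ℝ} {s : ℝ}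
    (hs : (thresholdSet f s).Nonempty) :
    ∃ u, s ≤ f u ∧ thresholdSet f s = thresholdSet f (f u) := by
  obtain ⟨u, hu, hmin⟩ := Finset.exists_min_image _ f hs
  simp only [thresholdSet, Finset.mem_filter, Finset.mem_univ, true_and] at hu hmin
  refine ⟨u, hu, Finset.ext fun x => ?_⟩
  simp only [thresholdSet, Finset.mem_filter, Finset.mem_univ, true_and]
  exact ⟨hmin x, hu.trans⟩

lemma exists_threshold_forall_mul_vol_le (hdeg : ∀ v, 0 < deg w v) {f : Fin n → ℝ}
    (hf : ∃ v, 0 < f v) :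
    ∃ t, 0 < t ∧ (thresholdSet f t).Nonempty ∧ ∀ s, 0 < s →
      cutWeight w (thresholdSet f t) (thresholdSet f t)ᶜ / vol w (thresholdSet f t) *
          vol w (thresholdSet f s) ≤ cutWeight w (thresholdSet f s) (thresholdSet f s)ᶜ := by
  obtain ⟨v, hv, hmin⟩ := Finset.exists_min_image (Finset.univ.filter (0 < f ·))
    (fun u => cutWeight w (thresholdSet f (f u)) (thresholdSet f (f u))ᶜ /
      vol w (thresholdSet f (f u))) (by simpa [Finset.filter_nonempty_iff] using hf)
  refine ⟨f v, by simpa using hv, ⟨v, by simp [thresholdSet]⟩, fun s hs => ?_⟩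
  obtain hempty | hne := (thresholdSet f s).eq_empty_or_nonempty
  · simp [hempty, vol, cutWeight]
  obtain ⟨u, hsu, hu⟩ := exists_thresholdSet_eq_apply hne
  rw [hu, ← le_div_iff₀ (vol_pos w hdeg ⟨u, by simp [thresholdSet]⟩)]
  exact hmin u (by simp only [Finset.mem_filter, Finset.mem_univ, true_and]; linarith)

end Conductance

theorem dirichlet_cheeger_general
    (w : Fin n → Fin n → ℝ)
    (hsym : ∀ u v, w u v = w v u) (hnn : ∀ u v, 0 ≤ w u v)
    (hdeg : ∀ v, 1 ≤ deg w v)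
    (h : Fin n → ℝ) (hne : h ≠ 0) (hhnn : ∀ v, 0 ≤ h v)
    (hsupp : vol w (supp h) ≤ vol w Finset.univ / 2) :
    phiF w h ≤
      ((1 / 2 : ℝ) * ∑ u, ∑ v, w u v * |h u - h v|) / (∑ v, deg w v * h v) ∧
    ∃ t : ℝ, 0 < t ∧ (thresholdSet h t).Nonempty ∧
      conductance w (thresholdSet h t) ≤
        ((1 / 2 : ℝ) * ∑ u, ∑ v, w u v * |h u - h v|) / (∑ v, deg w v * h v) := by
  have hdeg_pos : ∀ v, 0 < deg w v := fun v => one_pos.trans_le (hdeg v)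
  obtain ⟨v₀, hv₀⟩ : ∃ v, 0 < h v := by
    by_contra! hle
    exact hne (funext fun v => le_antisymm (hle v) (hhnn v))
  have hmass : 0 < ∑ v, deg w v * h v :=
    Finset.sum_pos' (fun v _ => mul_nonneg (hdeg_pos v).le (hhnn v))
      ⟨v₀, Finset.mem_univ _, mul_pos (hdeg_pos v₀) hv₀⟩
  obtain ⟨t, ht, hS, hmin⟩ := exists_threshold_forall_mul_vol_le w hdeg_pos ⟨v₀, hv₀⟩
  have hShalf : vol w (thresholdSet h t) ≤ vol w Finset.univ / 2 :=
    (vol_mono w hnn (thresholdSet_subset_supp ht)).trans hsupp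
  have hcond : conductance w (thresholdSet h t) ≤
      ((1 / 2 : ℝ) * ∑ u, ∑ v, w u v * |h u - h v|) / (∑ v, deg w v * h v) := by
    rw [conductance_eq_div_vol w hShalf, half_sum_abs_sub_eq_sum_posPart w hsym,
      le_div_iff₀ hmass]
    exact mul_sum_deg_le_sum_posPart w _ hhnn hmin
  have hproper : thresholdSet h t ≠ Finset.univ := fun huniv => by
    have hpos := vol_pos w hdeg_pos hS
    rw [huniv] at hShalf hpos
    linarith
  exact ⟨(phiF_le_conductance w hnn hS hproper).trans hcond, t, ht, hS, hcond⟩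

/-- Cheeger's inequality with Dirichlet boundary conditions:
`φ(h) ≤ (∑_{{u,v}∈E} w(u,v)|h(u)-h(v)|) / (∑_v w(v)h(v))`, witnessed by a
nonempty threshold set at some `t > 0`. -/
theorem dirichlet_cheeger
    (hn : 2 ≤ n) (w : Fin n → Fin n → ℝ)
    (hsym : ∀ u v, w u v = w v u) (hnn : ∀ u v, 0 ≤ w u v)
    (hloop : ∀ v, w v v = 0) (hdeg : ∀ v, 1 ≤ deg w v)
    (h : Fin n → ℝ) (hne : h ≠ 0) (hhnn : ∀ v, 0 ≤ h v)
    (hsupp : vol w (supp h) ≤ vol w Finset.univ / 2) :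
    phiF w h ≤
      ((1 / 2 : ℝ) * ∑ u, ∑ v, w u v * |h u - h v|) / (∑ v, deg w v * h v) ∧
    ∃ t : ℝ, 0 < t ∧ (thresholdSet h t).Nonempty ∧
      conductance w (thresholdSet h t) ≤
        ((1 / 2 : ℝ) * ∑ u, ∑ v, w u v * |h u - h v|) / (∑ v, deg w v * h v) :=
  dirichlet_cheeger_general w hsym hnn hdeg h hne hhnn hsupp

end

end CheegerHigher
end
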